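/- Let M be a flasque common meadow with M_0 a field. Then the map Φ : (M_0 × (0·M \ {a})) ⊔ {a} → M given by Φ(x, z) = x + z and Φ(a) = a is an isomorphism of common meadows (a bijection preserving +, ·, 0, 1 and inverse). -/
import Mathlib


structure IsPreMeadow (P : Type*) [Add P] [Mul P] [Neg P] [Zero P] [One P] : Prop where
  padd_assoc : ∀ x y z : P, (x + y) + z = x + (y + z)
  padd_comm : ∀ x y : P, x + y = y + x
  padd_zero : ∀ x : P, x + 0 = x
  padd_neg : ∀ x : P, x + (-x) = 0 * x
  pmul_assoc : ∀ x y z : P, (x * y) * z = x * (y * z)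
  pmul_comm : ∀ x y : P, x * y = y * x
  pone_mul : ∀ x : P, 1 * x = x
  pmul_add : ∀ x y z : P, x * (y + z) = x * y + x * z
  pneg_neg : ∀ x : P, -(-x) = x
  pzero_mul_add : ∀ x y : P, 0 * (x + y) = 0 * x * y

structure IsPreMeadowA (P : Type*) [Add P] [Mul P] [Neg P] [Zero P] [One P] (a : P)
    extends IsPreMeadow P : Prop where
  a_mem : ∃ x : P, 0 * x = a
  a_fiber : ∀ x : P, 0 * x = a → x = a
  a_unique : ∀ z : P, (∃ x : P, 0 * x = z) →
    (∀ x y : P, 0 * x = z → 0 * y = z → x = y) → z = a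
  add_a : ∀ x : P, x + a = a

structure IsCommonMeadow (M : Type*) [Add M] [Mul M] [Neg M] [Zero M] [One M] [Inv M] (a : M)
    extends IsPreMeadowA M a : Prop where
  mmul_inv : ∀ x : M, x * x⁻¹ = 1 + 0 * x⁻¹
  minv_mul : ∀ x y : M, (x * y)⁻¹ = x⁻¹ * y⁻¹
  minv_one_add : ∀ x : M, (1 + 0 * x)⁻¹ = 1 + 0 * x
  minv_zero : (0 : M)⁻¹ = a

open Classical in
/-- Addition on `(M × M) ⊔ {a}` (elements `some (x, z)` standing for pairs in
`M_0 × (0·M \ {a})`, `none` standing for `a`): `(x,z) + (y,w) = (x+y, z·w)` when `z·w ≠ a`,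
and `a` when `z·w = a`; `a` is absorbing. -/
noncomputable def pAdd {M : Type*} [Add M] [Mul M] (a : M) :
    Option (M × M) → Option (M × M) → Option (M × M)
  | Option.some p, Option.some q =>
      if p.2 * q.2 = a then Option.none else Option.some (p.1 + q.1, p.2 * q.2)
  | _, _ => Option.none

open Classical in
/-- Multiplication on `(M × M) ⊔ {a}`: `(x,z) · (y,w) = (x·y, z·w)`, with `a` absorbing. -/
noncomputable def pMul {M : Type*} [Mul M] (a : M) :
    Option (M × M) → Option (M × M) → Option (M × M)
  | Option.some p, Option.some q =>
      if p.2 * q.2 = a then Option.none else Option.some (p.1 * q.1, p.2 * q.2)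
  | _, _ => Option.none

/-- Negation: `-(x,z) = (-x, z)`, `-a = a`. -/
def pNeg {M : Type*} [Neg M] : Option (M × M) → Option (M × M)
  | Option.some p => Option.some (-p.1, p.2)
  | Option.none => Option.none

open Classical in
/-- Inverse: `(x,z)⁻¹ = (x⁻¹, z)` if `x` is invertible in `M_0`, and `a` otherwise. -/
noncomputable def pInv {M : Type*} [Mul M] [Zero M] [One M] [Inv M] (a : M) :
    Option (M × M) → Option (M × M)
  | Option.some p =>
      if ∃ y : M, 0 * y = 0 ∧ p.1 * y = 1 then Option.some (p.1⁻¹, p.2) else Option.none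
  | Option.none => Option.none

/-- The carrier of `M' = (M_0 × (0·M \ {a})) ⊔ {a}` inside `Option (M × M)`. -/
def pCarrier {M : Type*} [Mul M] [Zero M] (a : M) : Set (Option (M × M)) :=
  insert Option.none
    {p : Option (M × M) | ∃ x z : M, p = Option.some (x, z) ∧
      0 * x = 0 ∧ (∃ w : M, 0 * w = z) ∧ z ≠ a}

/-- The map `Φ : (M_0 × (0·M \ {a})) ⊔ {a} → M`, `Φ(x,z) = x + z`, `Φ(a) = a`. -/
def pPhi {M : Type*} [Add M] (a : M) : Option (M × M) → M
  | Option.some p => p.1 + p.2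
  | Option.none => a

namespace CMAux

variable {M : Type*} [Add M] [Mul M] [Neg M] [Zero M] [One M] [Inv M] {a : M}

lemma zo (h : IsCommonMeadow M a) : (0:M) * 1 = 0 :=
  (h.pmul_comm 0 1).trans (h.pone_mul 0)

lemma idem (h : IsCommonMeadow M a) (x : M) : 0 * (0 * x) = 0 * x := by
  have h2 : (0:M) * (x + 0) = 0 * x * 0 := h.pzero_mul_add x 0
  rw [h.padd_zero] at h2
  rw [h.pmul_comm 0 (0*x)]
  exact h2.symm

lemma fix (h : IsCommonMeadow M a) {z : M} (hz : ∃ u : M, 0 * u = z) : 0 * z = z := by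
  obtain ⟨u, rfl⟩ := hz; exact idem h u

lemma zz (h : IsCommonMeadow M a) : (0:M) * 0 = 0 := fix h ⟨1, zo h⟩

lemma addm (h : IsCommonMeadow M a) (x : M) : x + 0 * x = x := by
  have h1 : x * (1 + 0) = x * 1 + x * 0 := h.pmul_add x 1 0
  rw [h.padd_zero] at h1
  rw [h.pmul_comm x 1, h.pone_mul, h.pmul_comm x 0] at h1
  exact h1.symm

lemma mw (h : IsCommonMeadow M a) {m w : M} (hm : 0 * m = 0) (hw : ∃ u : M, 0 * u = w) :
    m * w = w := by
  have hf := fix h hw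
  calc m * w = m * (0 * w) := by rw [hf]
    _ = m * 0 * w := (h.pmul_assoc m 0 w).symm
    _ = 0 * m * w := by rw [h.pmul_comm m 0]
    _ = 0 * w := by rw [hm]
    _ = w := hf

lemma addf (h : IsCommonMeadow M a) {z w : M} (hz : ∃ u : M, 0*u = z)
    (hw : ∃ u : M, 0*u = w) : z + w = z * w := by
  obtain ⟨u, rfl⟩ := hz
  obtain ⟨v, rfl⟩ := hw
  have h1 : (0:M) * (u + v) = 0 * u + 0 * v := h.pmul_add 0 u v
  have h2 : (0:M) * (u + v) = 0 * u * v := h.pzero_mul_add u v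
  have h3 : (0:M) * u * (0 * v) = 0 * u * v := by
    calc (0:M)*u*(0*v) = 0*u*0*v := (h.pmul_assoc (0*u) 0 v).symm
      _ = 0*(0*u)*v := by rw [h.pmul_comm (0*u) 0]
      _ = 0*u*v := by rw [idem h u]
  rw [← h1, h2, h3]

lemma negz (h : IsCommonMeadow M a) (x : M) : 0 * (-x) = 0 * x := by
  have h1 : -x + -(-x) = 0 * (-x) := h.padd_neg (-x)
  rw [h.pneg_neg, h.padd_comm] at h1
  exact h1.symm.trans (h.padd_neg x)

lemma za (h : IsCommonMeadow M a) : (0:M) * a = a := by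
  have h1 : a + -a = 0 * a := h.padd_neg a
  rw [h.padd_comm] at h1
  exact h1.symm.trans (h.add_a (-a))

lemma a_zm (h : IsCommonMeadow M a) : ∃ u : M, 0 * u = a := ⟨a, za h⟩

lemma aa (h : IsCommonMeadow M a) : a * a = a :=
  (addf h (a_zm h) (a_zm h)).symm.trans (h.add_a a)

lemma amul (h : IsCommonMeadow M a) (x : M) : a * x = a := by
  have hax : ∃ u : M, 0 * u = a * x := ⟨a * x, by
    calc (0:M) * (a * x) = 0 * a * x := (h.pmul_assoc 0 a x).symm
      _ = a * x := by rw [za h]⟩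
  have h1 : a * x + a = a * x * a := addf h hax (a_zm h)
  have h3 : a * x * a = a * x := by
    calc a*x*a = x*a*a := by rw [h.pmul_comm a x]
      _ = x*(a*a) := h.pmul_assoc x a a
      _ = x*a := by rw [aa h]
      _ = a*x := h.pmul_comm x a
  exact (h3.symm.trans h1.symm).trans (h.add_a (a*x))

lemma self_add (h : IsCommonMeadow M a) {z : M} (hz : ∃ u : M, 0*u = z) : z + z = z := by
  have h1 := addm h z
  rwa [fix h hz] at h1

lemma phi_fib (h : IsCommonMeadow M a) {m z : M} (hm : 0*m = 0) (hz : ∃ u : M, 0*u = z) :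
    0*(m+z) = z := by
  calc (0:M)*(m+z) = 0*m*z := h.pzero_mul_add m z
    _ = 0*z := by rw [hm]
    _ = z := fix h hz


lemma zB (h : IsCommonMeadow M a) {z n w : M} (hz : ∃ u:M, 0*u=z) (hn : 0*n = 0)
    (hw : ∃ u:M, 0*u=w) : z * (n + w) = z * w := by
  have h1 : z*(n+w) = z*n + z*w := h.pmul_add z n w
  have h2 : z*n = z := (h.pmul_comm z n).trans (mw h hn hz)
  rw [h1, h2, ← addf h hz hw, ← h.padd_assoc, self_add h hz]

lemma zfull (h : IsCommonMeadow M a) {m z n w : M} (hm : 0*m=0) (hn : 0*n=0)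
    (hz : ∃ u:M, 0*u=z) (hw : ∃ u:M, 0*u=w) :
    0*((m+z)+(n+w)) = z*w := by
  calc (0:M)*((m+z)+(n+w)) = 0*(m+z)*(n+w) := h.pzero_mul_add _ _
    _ = z*(n+w) := by rw [phi_fib h hm hz]
    _ = z*w := zB h hz hn hw

lemma zfullm (h : IsCommonMeadow M a) {m z n w : M} (hm : 0*m=0) (hn : 0*n=0)
    (hz : ∃ u:M, 0*u=z) (hw : ∃ u:M, 0*u=w) :
    0*((m+z)*(n+w)) = z*w := by
  calc (0:M)*((m+z)*(n+w)) = 0*(m+z)*(n+w) := (h.pmul_assoc 0 _ _).symm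
    _ = z*(n+w) := by rw [phi_fib h hm hz]
    _ = z*w := zB h hz hn hw

lemma add_main (h : IsCommonMeadow M a) {m z n w : M}
    (hz : ∃ u:M, 0*u=z) (hw : ∃ u:M, 0*u=w) :
    (m+z)+(n+w) = (m+n) + z*w := by
  letI : Std.Associative (α := M) (· + ·) := ⟨h.padd_assoc⟩
  letI : Std.Commutative (α := M) (· + ·) := ⟨h.padd_comm⟩
  have hac : (m+z)+(n+w) = (m+n)+(z+w) := by ac_rfl
  rw [hac, addf h hz hw]

lemma mul_main (h : IsCommonMeadow M a) {m z n w : M} (hm : 0*m=0) (hn : 0*n=0)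
    (hz : ∃ u:M, 0*u=z) (hw : ∃ u:M, 0*u=w) :
    (m+z)*(n+w) = m*n + z*w := by
  letI : Std.Associative (α := M) (· + ·) := ⟨h.padd_assoc⟩
  letI : Std.Commutative (α := M) (· + ·) := ⟨h.padd_comm⟩
  have e1 : (m+z)*(n+w) = (m+z)*n + (m+z)*w := h.pmul_add (m+z) n w
  have e2 : (m+z)*n = m*n + z := by
    rw [h.pmul_comm (m+z) n, h.pmul_add n m z, h.pmul_comm n m, mw h hn hz]
  have e3 : (m+z)*w = w + (z+w) := by
    rw [h.pmul_comm (m+z) w, h.pmul_add w m z, h.pmul_comm w m, mw h hm hw,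
      h.pmul_comm w z, ← addf h hz hw]
  have hzz := self_add h hz
  have hww := self_add h hw
  have hac : (m*n+z)+(w+(z+w)) = m*n + ((z+z)+(w+w)) := by ac_rfl
  rw [e1, e2, e3, hac, hzz, hww, addf h hz hw]

lemma inv_main (h : IsCommonMeadow M a) {m z : M} (hm : 0*m = 0) (hz : ∃ u:M, 0*u=z) :
    (m+z)⁻¹ = m⁻¹ + z := by
  have e1 : m + z = m*(1+z) := by
    rw [h.pmul_add m 1 z, h.pmul_comm m 1, h.pone_mul, mw h hm hz]
  have e2 : ((1:M) + z)⁻¹ = 1 + z := by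
    conv_lhs => rw [← fix h hz]
    rw [h.minv_one_add z, fix h hz]
  have e3 : m⁻¹*z = (0*m⁻¹)*z := by
    conv_lhs => rw [← fix h hz]
    rw [← h.pmul_assoc, h.pmul_comm m⁻¹ 0]
  calc (m+z)⁻¹ = (m*(1+z))⁻¹ := by rw [← e1]
    _ = m⁻¹ * (1+z)⁻¹ := h.minv_mul m (1+z)
    _ = m⁻¹ * (1+z) := by rw [e2]
    _ = m⁻¹*1 + m⁻¹*z := h.pmul_add m⁻¹ 1 z
    _ = m⁻¹ + m⁻¹*z := by rw [h.pmul_comm m⁻¹ 1, h.pone_mul]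
    _ = m⁻¹ + (0*m⁻¹)*z := by rw [e3]
    _ = m⁻¹ + (0*m⁻¹ + z) := by rw [addf h ⟨m⁻¹, rfl⟩ hz]
    _ = (m⁻¹ + 0*m⁻¹) + z := (h.padd_assoc _ _ _).symm
    _ = m⁻¹ + z := by rw [addm h m⁻¹]

lemma ainv (h : IsCommonMeadow M a) : a⁻¹ = a := by
  conv_lhs => rw [← za h]
  rw [h.minv_mul 0 a, h.minv_zero, amul h]

lemma zinv (h : IsCommonMeadow M a) {z : M} (hz : ∃ u:M, 0*u=z) : z⁻¹ = a := by
  conv_lhs => rw [← fix h hz]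
  rw [h.minv_mul 0 z, h.minv_zero, amul h]

lemma ideal_step (h : IsCommonMeadow M a) {z c e : M} (hz : ∃ u:M, 0*u=z) (hc : 0*c = 0)
    (he : e + z = z) : c*e + z = z := by
  have h1 : c*e + c*z = c*z := by
    have h0 : c * (e + z) = c * z := congrArg (fun t => c * t) he
    rw [h.pmul_add c e z] at h0
    exact h0
  have h2 : z*c + z*(-c) = z := by
    rw [← h.pmul_add z c (-c), h.padd_neg c, hc, h.pmul_comm z 0, fix h hz]
  rw [h.pmul_comm c z] at h1
  calc c*e + z = c*e + (z*c + z*(-c)) := by rw [h2]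
    _ = (c*e + z*c) + z*(-c) := (h.padd_assoc _ _ _).symm
    _ = z*c + z*(-c) := by rw [h1]
    _ = z := h2

lemma absorb_all (h : IsCommonMeadow M a) {z : M} (hz : ∃ u:M, 0*u=z) {d : M}
    (hdz : d + z = z) (hd' : ∃ y : M, 0*y = 0 ∧ d*y = 1) :
    ∀ c : M, 0*c = 0 → c + z = z := by
  obtain ⟨y, hy0, hdy⟩ := hd'
  have h1 : (1:M) + z = z := by
    have h0 := ideal_step h hz hy0 hdz
    rwa [h.pmul_comm y d, hdy] at h0
  intro c hc
  have h0 := ideal_step h hz hc h1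
  rwa [h.pmul_comm c 1, h.pone_mul] at h0

end CMAux

/-- Let `M` be a flasque common meadow with `M_0` a field. Then
`Φ : (M_0 × (0·M \ {a})) ⊔ {a} → M`, `Φ(x,z) = x + z`, `Φ(a) = a`, is an isomorphism of
common meadows: a bijection onto `M` preserving `+`, `·`, `0`, `1` and inverse. -/
theorem flasque_meadows_stmt11 {M : Type*} [Add M] [Mul M] [Neg M] [Zero M] [One M] [Inv M]
    {a : M} (h : IsCommonMeadow M a)
    (hflasque : ∀ z w : M, (∃ u : M, 0 * u = z) → (∃ u : M, 0 * u = w) → z * w = z →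
      ∀ y : M, 0 * y = z → ∃ x : M, 0 * x = w ∧ x + z = y)
    (hnt : (1 : M) ≠ 0)
    (hfield : ∀ x : M, 0 * x = 0 → x ≠ 0 → ∃ y : M, 0 * y = 0 ∧ x * y = 1) :
    Set.BijOn (pPhi a) (pCarrier a) Set.univ ∧
    (∀ p ∈ pCarrier a, ∀ q ∈ pCarrier a, pPhi a (pAdd a p q) = pPhi a p + pPhi a q) ∧
    (∀ p ∈ pCarrier a, ∀ q ∈ pCarrier a, pPhi a (pMul a p q) = pPhi a p * pPhi a q) ∧
    pPhi a (Option.some ((0 : M), (0 : M))) = 0 ∧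
    pPhi a (Option.some ((1 : M), (0 : M))) = 1 ∧
    (∀ p ∈ pCarrier a, pPhi a (pInv a p) = (pPhi a p)⁻¹) := by
  classical
  have hcar : ∀ p ∈ pCarrier a, p = Option.none ∨
      ∃ x z : M, p = Option.some (x, z) ∧ 0*x = 0 ∧ (∃ w : M, 0*w = z) ∧ z ≠ a := by
    intro p hp
    rcases Set.mem_insert_iff.mp hp with hp | hp
    · exact Or.inl hp
    · exact Or.inr hp
  have hsurjfib : ∀ z : M, (∃ u : M, 0*u = z) → ∀ y : M, 0*y = z →
      ∃ x : M, 0*x = 0 ∧ x + z = y := by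
    intro z hz y hy
    exact hflasque z 0 hz ⟨1, CMAux.zo h⟩ ((h.pmul_comm z 0).trans (CMAux.fix h hz)) y hy
  have hcancel : ∀ z : M, (∃ u:M,0*u=z) → z ≠ a → ∀ x y : M, 0*x = 0 → 0*y = 0 →
      x + z = y + z → x = y := by
    intro z hz hzne x y hx hy hxy
    have hd0 : 0*(x + -y) = 0 := by
      calc (0:M)*(x + -y) = 0*x*(-y) := h.pzero_mul_add x (-y)
        _ = 0*(-y) := by rw [hx]
        _ = 0*y := CMAux.negz h y
        _ = 0 := hy
    have hnyy : -y + y = (0:M) := (h.padd_comm (-y) y).trans ((h.padd_neg y).trans hy)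
    have hdz : (x + -y) + z = z := by
      calc (x + -y) + z = x + (-y + z) := h.padd_assoc ..
        _ = x + (z + -y) := by rw [h.padd_comm (-y) z]
        _ = (x + z) + -y := (h.padd_assoc ..).symm
        _ = (y + z) + -y := by rw [hxy]
        _ = y + (z + -y) := h.padd_assoc ..
        _ = y + (-y + z) := by rw [h.padd_comm z (-y)]
        _ = (y + -y) + z := (h.padd_assoc ..).symm
        _ = 0*y + z := by rw [h.padd_neg y]
        _ = 0 + z := by rw [hy]
        _ = z + 0 := h.padd_comm ..
        _ = z := h.padd_zero z
    have hd : x + -y = 0 := by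
      by_contra hne
      obtain ⟨y', hy'⟩ := hfield (x + -y) hd0 hne
      have habs := CMAux.absorb_all h hz hdz ⟨y', hy'⟩
      have hsing : ∀ p q : M, 0*p = z → 0*q = z → p = q := by
        intro p q hp hq
        obtain ⟨xp, hxp0, hxpz⟩ := hsurjfib z hz p hp
        obtain ⟨xq, hxq0, hxqz⟩ := hsurjfib z hz q hq
        rw [← hxpz, ← hxqz, habs xp hxp0, habs xq hxq0]
      exact hzne (h.a_unique z hz hsing)
    calc x = x + 0 := (h.padd_zero x).symm
      _ = x + (-y + y) := by rw [hnyy]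
      _ = (x + -y) + y := (h.padd_assoc ..).symm
      _ = 0 + y := by rw [hd]
      _ = y + 0 := h.padd_comm ..
      _ = y := h.padd_zero y
  refine ⟨⟨fun p _ => Set.mem_univ _, ?_, ?_⟩, ?_, ?_, ?_, ?_, ?_⟩
  · -- InjOn
    intro p hp q hq hpq
    rcases hcar p hp with rfl | ⟨x, z, rfl, hx, hz, hzne⟩ <;>
      rcases hcar q hq with rfl | ⟨y, w, rfl, hy, hw, hwne⟩
    · rfl
    · exfalso
      replace hpq : a = y + w := hpq
      apply hwne
      rw [← CMAux.phi_fib h hy hw, ← hpq]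
      exact CMAux.za h
    · exfalso
      replace hpq : x + z = a := hpq
      apply hzne
      rw [← CMAux.phi_fib h hx hz, hpq]
      exact CMAux.za h
    · replace hpq : x + z = y + w := hpq
      have hzw : z = w := by
        rw [← CMAux.phi_fib h hx hz, ← CMAux.phi_fib h hy hw, hpq]
      subst hzw
      have hxy := hcancel z hz hzne x y hx hy hpq
      rw [hxy]
  · -- SurjOn
    intro y _
    by_cases hy : 0*y = a
    · exact ⟨Option.none, Set.mem_insert _ _, (h.a_fiber y hy).symm⟩
    · obtain ⟨x, hx0, hxz⟩ := hsurjfib (0*y) ⟨y, rfl⟩ y rfl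
      exact ⟨Option.some (x, 0*y),
        Set.mem_insert_iff.mpr (Or.inr ⟨x, 0*y, rfl, hx0, ⟨y, rfl⟩, hy⟩), hxz⟩
  · -- addition
    intro p hp q hq
    rcases hcar p hp with rfl | ⟨x, z, rfl, hx, hz, hzne⟩ <;>
      rcases hcar q hq with rfl | ⟨y, w, rfl, hy, hw, hwne⟩
    · exact (h.add_a a).symm
    · exact ((h.padd_comm a (y + w)).trans (h.add_a (y + w))).symm
    · exact (h.add_a (x + z)).symm
    · have hred : pAdd a (Option.some (x,z)) (Option.some (y,w)) =
          if z*w = a then Option.none else Option.some (x+y, z*w) := rfl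
      by_cases hzw : z*w = a
      · rw [hred, if_pos hzw]
        show a = (x+z)+(y+w)
        exact (h.a_fiber _ ((CMAux.zfull h hx hy hz hw).trans hzw)).symm
      · rw [hred, if_neg hzw]
        show (x+y) + z*w = (x+z)+(y+w)
        exact (CMAux.add_main h hz hw).symm
  · -- multiplication
    intro p hp q hq
    rcases hcar p hp with rfl | ⟨x, z, rfl, hx, hz, hzne⟩ <;>
      rcases hcar q hq with rfl | ⟨y, w, rfl, hy, hw, hwne⟩
    · exact (CMAux.amul h a).symm
    · exact (CMAux.amul h (y + w)).symm
    · exact ((h.pmul_comm (x+z) a).trans (CMAux.amul h (x+z))).symm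
    · have hred : pMul a (Option.some (x,z)) (Option.some (y,w)) =
          if z*w = a then Option.none else Option.some (x*y, z*w) := rfl
      by_cases hzw : z*w = a
      · rw [hred, if_pos hzw]
        show a = (x+z)*(y+w)
        exact (h.a_fiber _ ((CMAux.zfullm h hx hy hz hw).trans hzw)).symm
      · rw [hred, if_neg hzw]
        show x*y + z*w = (x+z)*(y+w)
        exact (CMAux.mul_main h hx hy hz hw).symm
  · exact h.padd_zero 0
  · exact h.padd_zero 1
  · -- inverse
    intro p hp
    rcases hcar p hp with rfl | ⟨x, z, rfl, hx, hz, hzne⟩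
    · exact (CMAux.ainv h).symm
    · have hred : pInv a (Option.some (x,z)) =
          if ∃ y : M, 0*y = 0 ∧ x*y = 1 then Option.some (x⁻¹, z) else Option.none := rfl
      by_cases hex : ∃ y : M, 0*y = 0 ∧ x*y = 1
      · rw [hred, if_pos hex]
        show x⁻¹ + z = (x + z)⁻¹
        exact (CMAux.inv_main h hx hz).symm
      · have hx0 : x = 0 := by
          by_contra hne
          exact hex (hfield x hx hne)
        rw [hred, if_neg hex]
        show a = (x + z)⁻¹
        rw [hx0, h.padd_comm 0 z, h.padd_zero]
        exact (CMAux.zinv h hz).symm
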